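/- arXiv:math/9804109 — 2 statements merged into one kernel-verified Lean document; each statement's English description precedes it below -/
import Mathlib

section
/- Suppose q ∈ K is nonzero and not equal to 1, and σ is a K-algebra automorphism of the quantum Weyl algebra A = K⟨x,y⟩/(xy - q·yx - 1) such that σ(x) = α₁·x + β₁ and σ(y) = α₂·y + β₂ for scalars α₁, α₂, β₁, β₂ ∈ K with α₁, α₂ nonzero. Then β₁ = 0, β₂ = 0, and α₂ = α₁⁻¹. -/
/-!
Applying `σ` to `x * y = q • (y * x) + 1` and expanding with the same relation leaves the linear
relation `(1 - q) α₁ β₂ • x + (1 - q) α₂ β₁ • y + (α₁ α₂ - 1 + (1 - q) β₁ β₂) = 0`. Since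
`1, x, y` are linearly independent, as the representation `x ↦ D_q` (Jackson's `q`-derivative),
`y ↦ X · _` on `K[X]` shows, all three coefficients vanish.
-/

noncomputable section

/-- The defining relation `x * y = q • (y * x) + 1` of the quantum Weyl algebra. -/
inductive WeylRel (K : Type*) [Field K] (q : K) :
    FreeAlgebra K (Fin 2) → FreeAlgebra K (Fin 2) → Prop
  | rel : WeylRel K q (FreeAlgebra.ι K 0 * FreeAlgebra.ι K 1)
      (q • (FreeAlgebra.ι K 1 * FreeAlgebra.ι K 0) + 1)

/-- The quantum Weyl algebra `K⟨x,y⟩/(xy - q·yx - 1)`. -/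
abbrev WeylAlg (K : Type*) [Field K] (q : K) := RingQuot (WeylRel K q)

open Polynomial Finset

section QuantumRelation

variable {K R : Type*} [Field K] [Ring R] [Algebra K R]

theorem smul_add_smul_add_algebraMap_eq_zero_of_affine_mul_affine {q : K} {x y : R}
    (hxy : x * y = q • (y * x) + 1) {a b c d : K}
    (h : (a • x + algebraMap K R c) * (b • y + algebraMap K R d) =
      q • ((b • y + algebraMap K R d) * (a • x + algebraMap K R c)) + 1) :
    ((1 - q) * a * d) • x + ((1 - q) * b * c) • y +
      algebraMap K R (a * b - 1 + (1 - q) * c * d) = 0 := by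
  rw [← sub_eq_zero] at h
  rw [← h]
  simp only [Algebra.algebraMap_eq_smul_one, add_mul, mul_add, smul_mul_smul_comm, one_mul,
    mul_one, hxy]
  module

end QuantumRelation

namespace Polynomial

variable {K : Type*} [Field K]

def qDeriv (q : K) : K[X] →ₗ[K] K[X] :=
  (basisMonomials K).constr K fun n => (∑ i ∈ range n, q ^ i) • X ^ (n - 1)

theorem qDeriv_X_pow (q : K) (n : ℕ) :
    qDeriv q (X ^ n) = (∑ i ∈ range n, q ^ i) • X ^ (n - 1) := by
  simpa [qDeriv, coe_basisMonomials, monomial_one_right_eq_X_pow] using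
    (basisMonomials K).constr_basis K (fun n => (∑ i ∈ range n, q ^ i) • (X : K[X]) ^ (n - 1)) n

@[simp]
theorem qDeriv_one (q : K) : qDeriv q 1 = 0 := by
  simpa using qDeriv_X_pow q 0

@[simp]
theorem qDeriv_X (q : K) : qDeriv q X = 1 := by
  simpa using qDeriv_X_pow q 1

theorem qDeriv_mul_mulLeft_X (q : K) :
    qDeriv q * LinearMap.mulLeft K X = q • (LinearMap.mulLeft K X * qDeriv q) + 1 := by
  refine (basisMonomials K).ext fun n => ?_
  simp only [coe_basisMonomials, monomial_one_right_eq_X_pow, Module.End.mul_apply,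
    LinearMap.add_apply, LinearMap.smul_apply, Module.End.one_apply, LinearMap.mulLeft_apply,
    ← pow_succ', qDeriv_X_pow, Nat.add_sub_cancel, geom_sum_succ, mul_smul_comm]
  rcases n with _ | n
  · simp
  · rw [Nat.add_sub_cancel, add_smul, one_smul, smul_smul]

end Polynomial

namespace WeylAlg

variable {K : Type*} [Field K] {q : K}

variable (K q) in
abbrev x : WeylAlg K q := RingQuot.mkAlgHom K (WeylRel K q) (FreeAlgebra.ι K 0)

variable (K q) in
abbrev y : WeylAlg K q := RingQuot.mkAlgHom K (WeylRel K q) (FreeAlgebra.ι K 1)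

theorem x_mul_y : x K q * y K q = q • (y K q * x K q) + 1 := by
  simpa [x, y] using RingQuot.mkAlgHom_rel K (WeylRel.rel (K := K) (q := q))

variable (q) in
def polyRep : WeylAlg K q →ₐ[K] Module.End K K[X] :=
  RingQuot.liftAlgHom K ⟨FreeAlgebra.lift K ![qDeriv q, LinearMap.mulLeft K X], by
    rintro _ _ ⟨⟩
    simpa using qDeriv_mul_mulLeft_X q⟩

@[simp]
theorem polyRep_x : polyRep q (x K q) = qDeriv q := by
  simp [polyRep, x]

@[simp]
theorem polyRep_y : polyRep q (y K q) = LinearMap.mulLeft K X := by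
  simp [polyRep, y]

theorem eq_zero_of_smul_x_add_smul_y_add_algebraMap_eq_zero {a b c : K}
    (h : a • x K q + b • y K q + algebraMap K (WeylAlg K q) c = 0) :
    a = 0 ∧ b = 0 ∧ c = 0 := by
  have hrep : a • qDeriv q + b • LinearMap.mulLeft K X + algebraMap K _ c = 0 := by
    simpa using congrArg (polyRep q) h
  have at_one : b • X + C c = 0 := by simpa [smul_eq_C_mul] using congrArg (· 1) hrep
  have at_X : C a + b • X ^ 2 + c • X = 0 := by
    simpa [smul_eq_C_mul, sq] using congrArg (· X) hrep
  refine ⟨?_, ?_, ?_⟩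
  · simpa using congrArg (coeff · 0) at_X
  · simpa using congrArg (coeff · 1) at_one
  · simpa using congrArg (coeff · 0) at_one

end WeylAlg

theorem stmt_5_general (K : Type*) [Field K] (q : K) (hq1 : q ≠ 1)
    (α₁ α₂ β₁ β₂ : K) (hα₁ : α₁ ≠ 0) (hα₂ : α₂ ≠ 0)
    (σ : WeylAlg K q ≃ₐ[K] WeylAlg K q)
    (hx : σ (RingQuot.mkAlgHom K (WeylRel K q) (FreeAlgebra.ι K 0)) =
      α₁ • RingQuot.mkAlgHom K (WeylRel K q) (FreeAlgebra.ι K 0) +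
        algebraMap K (WeylAlg K q) β₁)
    (hy : σ (RingQuot.mkAlgHom K (WeylRel K q) (FreeAlgebra.ι K 1)) =
      α₂ • RingQuot.mkAlgHom K (WeylRel K q) (FreeAlgebra.ι K 1) +
        algebraMap K (WeylAlg K q) β₂) :
    β₁ = 0 ∧ β₂ = 0 ∧ α₂ = α₁⁻¹ := by
  open WeylAlg in
  have hσ : σ (x K q) * σ (y K q) = q • (σ (y K q) * σ (x K q)) + 1 := by
    simpa using congrArg σ x_mul_y
  rw [hx, hy] at hσ
  obtain ⟨hβ₂, hβ₁, hα⟩ := eq_zero_of_smul_x_add_smul_y_add_algebraMap_eq_zero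
    (smul_add_smul_add_algebraMap_eq_zero_of_affine_mul_affine (R := WeylAlg K q) x_mul_y hσ)
  have hq : 1 - q ≠ 0 := sub_ne_zero.mpr hq1.symm
  simp only [mul_eq_zero, hq, hα₁, hα₂, false_or] at hβ₁ hβ₂
  refine ⟨hβ₁, hβ₂, eq_inv_of_mul_eq_one_right ?_⟩
  simpa [hβ₁, sub_eq_zero] using hα

/-- If `σ` is a `K`-algebra automorphism of the quantum Weyl algebra with
`σ(x) = α₁ x + β₁` and `σ(y) = α₂ y + β₂` (with `α₁, α₂ ≠ 0`, and `q ≠ 0, 1`),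
then `β₁ = 0`, `β₂ = 0`, and `α₂ = α₁⁻¹`. -/
theorem stmt_5 (K : Type*) [Field K] (q : K) (hq : q ≠ 0) (hq1 : q ≠ 1)
    (α₁ α₂ β₁ β₂ : K) (hα₁ : α₁ ≠ 0) (hα₂ : α₂ ≠ 0)
    (σ : WeylAlg K q ≃ₐ[K] WeylAlg K q)
    (hx : σ (RingQuot.mkAlgHom K (WeylRel K q) (FreeAlgebra.ι K 0)) =
      α₁ • RingQuot.mkAlgHom K (WeylRel K q) (FreeAlgebra.ι K 0) +
        algebraMap K (WeylAlg K q) β₁)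
    (hy : σ (RingQuot.mkAlgHom K (WeylRel K q) (FreeAlgebra.ι K 1)) =
      α₂ • RingQuot.mkAlgHom K (WeylRel K q) (FreeAlgebra.ι K 1) +
        algebraMap K (WeylAlg K q) β₂) :
    β₁ = 0 ∧ β₂ = 0 ∧ α₂ = α₁⁻¹ :=
  stmt_5_general K q hq1 α₁ α₂ β₁ β₂ hα₁ hα₂ σ hx hy
end
end

section
/- Let q ∈ K with q ≠ 0 and q² ≠ 1. Let R = K_q[y^{±1}, z] with relation yz = q·zy and y invertible, τ the automorphism with τ(y) = q·y and τ(z) = q⁻¹·z, and δ the τ-derivation with δ(y) = z, δ(z) = 0. Then the element c = q·(1 - q²)⁻¹·y⁻¹·z satisfies δ(r) = c·r - τ(r)·c for all r ∈ R; that is, δ is an inner τ-derivation. -/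
noncomputable section

/-- The defining relations of `K_q[y^{±1}, z]`: generator `0` is `y`,
`1` is `y⁻¹`, `2` is `z`, with `y y⁻¹ = y⁻¹ y = 1` and `y z = q·z y`. -/
inductive QLocRel (K : Type*) [Field K] (q : K) :
    FreeAlgebra K (Fin 3) → FreeAlgebra K (Fin 3) → Prop
  | yinv : QLocRel K q (FreeAlgebra.ι K 0 * FreeAlgebra.ι K 1) 1
  | invy : QLocRel K q (FreeAlgebra.ι K 1 * FreeAlgebra.ι K 0) 1
  | comm : QLocRel K q (FreeAlgebra.ι K 0 * FreeAlgebra.ι K 2)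
      (q • (FreeAlgebra.ι K 2 * FreeAlgebra.ι K 0))

/-- The algebra `K_q[y^{±1}, z]`. -/
abbrev QLoc (K : Type*) [Field K] (q : K) := RingQuot (QLocRel K q)

/-- For `q ≠ 0` with `q² ≠ 1`, the `τ`-derivation `δ` with `δ(y) = z`,
`δ(z) = 0` (where `τ(y) = q·y`, `τ(z) = q⁻¹·z`) is inner, induced by
`c = q·(1-q²)⁻¹·y⁻¹·z`: one has `δ(r) = c·r - τ(r)·c` for all `r`. -/
theorem stmt_10 (K : Type*) [Field K] (q : K) (hq : q ≠ 0) (hq2 : q ^ 2 ≠ 1)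
    (y yinv z : QLoc K q)
    (hy : y = RingQuot.mkAlgHom K (QLocRel K q) (FreeAlgebra.ι K 0))
    (hyinv : yinv = RingQuot.mkAlgHom K (QLocRel K q) (FreeAlgebra.ι K 1))
    (hz : z = RingQuot.mkAlgHom K (QLocRel K q) (FreeAlgebra.ι K 2))
    (τ : QLoc K q →ₐ[K] QLoc K q)
    (hτy : τ y = q • y) (hτz : τ z = q⁻¹ • z)
    (δ : QLoc K q →ₗ[K] QLoc K q)
    (hδmul : ∀ a b : QLoc K q, δ (a * b) = δ a * b + τ a * δ b)
    (hδy : δ y = z) (hδz : δ z = 0) :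
    ∀ r : QLoc K q,
      δ r = ((q * (1 - q ^ 2)⁻¹) • (yinv * z)) * r -
        τ r * ((q * (1 - q ^ 2)⁻¹) • (yinv * z)) := by
  intro r
  set lam : K := q * (1 - q ^ 2)⁻¹ with hlam
  set c : QLoc K q := lam • (yinv * z) with hc
  have h1q : (1 : K) - q ^ 2 ≠ 0 := sub_ne_zero.mpr (Ne.symm hq2)
  have subsmul : ∀ (a b : K) (x : QLoc K q), a • x - b • x = (a - b) • x := by
    intro a b x
    rw [Algebra.smul_def, Algebra.smul_def, Algebra.smul_def, ← sub_mul, ← map_sub]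
  -- relations in the quotient
  have hyy : y * yinv = 1 := by
    rw [hy, hyinv, ← map_mul, ← map_one (RingQuot.mkAlgHom K (QLocRel K q))]
    exact RingQuot.mkAlgHom_rel K QLocRel.yinv
  have hyy' : yinv * y = 1 := by
    rw [hy, hyinv, ← map_mul, ← map_one (RingQuot.mkAlgHom K (QLocRel K q))]
    exact RingQuot.mkAlgHom_rel K QLocRel.invy
  have hcomm : y * z = q • (z * y) := by
    have h := RingQuot.mkAlgHom_rel K (QLocRel.comm (K := K) (q := q))
    rw [map_mul, map_smul, map_mul] at h
    rw [hy, hz]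
    exact h
  have hzy : z * y = q⁻¹ • (y * z) := by
    rw [hcomm, smul_smul, inv_mul_cancel₀ hq, one_smul]
  have hzyinv : z * yinv = q • (yinv * z) := by
    calc z * yinv = (yinv * y) * (z * yinv) := by rw [hyy', one_mul]
      _ = yinv * ((y * z) * yinv) := by rw [mul_assoc, mul_assoc]
      _ = yinv * ((q • (z * y)) * yinv) := by rw [hcomm]
      _ = q • (yinv * (z * (y * yinv))) := by
          rw [smul_mul_assoc, mul_smul_comm, mul_assoc]
      _ = q • (yinv * z) := by rw [hyy, mul_one]
  have hδ1 : δ (1 : QLoc K q) = 0 := by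
    have h := hδmul 1 1
    rw [mul_one, map_one τ, one_mul, mul_one, left_eq_add] at h
    exact h
  have hτyinv : τ yinv = q⁻¹ • yinv := by
    have h1 : τ yinv * y = q⁻¹ • (1 : QLoc K q) := by
      have h := congrArg τ hyy'
      rw [map_mul, map_one, hτy, mul_smul_comm] at h
      calc τ yinv * y = q⁻¹ • (q • (τ yinv * y)) := by
            rw [smul_smul, inv_mul_cancel₀ hq, one_smul]
        _ = q⁻¹ • (1 : QLoc K q) := by rw [h]
    calc τ yinv = τ yinv * (y * yinv) := by rw [hyy, mul_one]
      _ = (τ yinv * y) * yinv := (mul_assoc _ _ _).symm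
      _ = q⁻¹ • yinv := by rw [h1, smul_mul_assoc, one_mul]
  have hδyinv : δ yinv = -(yinv * (yinv * z)) := by
    have h0 : δ y * yinv + τ y * δ yinv = 0 := by
      rw [← hδmul, hyy, hδ1]
    rw [hδy, hτy, smul_mul_assoc] at h0
    have h1 : q • (y * δ yinv) = -(z * yinv) := by
      rw [eq_neg_iff_add_eq_zero, add_comm]; exact h0
    have h2 : y * δ yinv = q⁻¹ • -(z * yinv) := by
      calc y * δ yinv = q⁻¹ • (q • (y * δ yinv)) := by
            rw [smul_smul, inv_mul_cancel₀ hq, one_smul]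
        _ = q⁻¹ • -(z * yinv) := by rw [h1]
    calc δ yinv = yinv * (y * δ yinv) := by rw [← mul_assoc, hyy', one_mul]
      _ = yinv * (q⁻¹ • -(q • (yinv * z))) := by rw [h2, hzyinv]
      _ = -(yinv * (yinv * z)) := by
          rw [smul_neg, smul_smul, inv_mul_cancel₀ hq, one_smul]
          exact mul_neg yinv (yinv * z)
  -- the predicate
  set P : QLoc K q → Prop := fun r => δ r = c * r - τ r * c with hP
  have hPalg : ∀ k : K, P (algebraMap K (QLoc K q) k) := by
    intro k
    show δ (algebraMap K (QLoc K q) k) = c * algebraMap K (QLoc K q) k -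
      τ (algebraMap K (QLoc K q) k) * c
    rw [AlgHom.commutes, Algebra.algebraMap_eq_smul_one, map_smul, hδ1, smul_zero,
      mul_smul_comm, smul_mul_assoc k 1 c, mul_one, one_mul, sub_self]
  have hPy : P y := by
    show δ y = c * y - τ y * c
    have e1 : c * y = (lam * q⁻¹) • z := by
      rw [hc, smul_mul_assoc, mul_assoc yinv z y, hzy, mul_smul_comm, smul_smul,
        ← mul_assoc yinv y z, hyy', one_mul]
    have e2 : τ y * c = (q * lam) • z := by
      rw [hτy, hc, smul_mul_assoc, mul_smul_comm, smul_smul,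
        ← mul_assoc y yinv z, hyy, one_mul]
    rw [hδy, e1, e2, subsmul]
    have hs : lam * q⁻¹ - q * lam = 1 := by
      rw [hlam]; field_simp
    rw [hs, one_smul]
  have hPz : P z := by
    show δ z = c * z - τ z * c
    have e1 : c * z = lam • (yinv * (z * z)) := by
      rw [hc, smul_mul_assoc, mul_assoc]
    have e2 : τ z * c = (q⁻¹ * lam * q) • (yinv * (z * z)) := by
      rw [hτz, hc, smul_mul_assoc, mul_smul_comm, smul_smul,
        ← mul_assoc z yinv z, hzyinv, smul_mul_assoc, smul_smul,
        mul_assoc yinv z z]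
    have hs : q⁻¹ * lam * q = lam := by
      rw [mul_comm q⁻¹ lam, mul_assoc, inv_mul_cancel₀ hq, mul_one]
    rw [hδz, e1, e2, hs, sub_self]
  have hPyinv : P yinv := by
    show δ yinv = c * yinv - τ yinv * c
    have e1 : c * yinv = (lam * q) • (yinv * (yinv * z)) := by
      rw [hc, smul_mul_assoc, mul_assoc yinv z yinv, hzyinv, mul_smul_comm,
        smul_smul]
    have e2 : τ yinv * c = (q⁻¹ * lam) • (yinv * (yinv * z)) := by
      rw [hτyinv, hc, smul_mul_assoc, mul_smul_comm, smul_smul]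
    rw [hδyinv, e1, e2, subsmul]
    have hs : lam * q - q⁻¹ * lam = -1 := by
      rw [hlam]; field_simp; ring
    have hneg : ∀ x : QLoc K q, (-1 : K) • x = -x := by
      intro x
      rw [Algebra.smul_def, map_neg, map_one]
      exact neg_one_mul x
    rw [hs, hneg]
  have hPmul : ∀ a b : QLoc K q, P a → P b → P (a * b) := by
    intro a b ha hb
    show δ (a * b) = c * (a * b) - τ (a * b) * c
    rw [hδmul, ha, hb, map_mul, sub_mul, mul_sub, mul_assoc c a b,
      mul_assoc (τ a) c b, mul_assoc (τ a) (τ b) c]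
    abel
  have hPadd : ∀ a b : QLoc K q, P a → P b → P (a + b) := by
    intro a b ha hb
    show δ (a + b) = c * (a + b) - τ (a + b) * c
    rw [map_add, ha, hb, map_add, mul_add, add_mul]
    abel
  obtain ⟨a, rfl⟩ := RingQuot.mkAlgHom_surjective K (QLocRel K q) r
  show P _
  induction a using FreeAlgebra.induction with
  | grade0 k => rw [AlgHom.commutes]; exact hPalg k
  | grade1 i =>
      fin_cases i
      · exact hy ▸ hPy
      · exact hyinv ▸ hPyinv
      · exact hz ▸ hPz
  | mul x w hx hw => rw [map_mul]; exact hPmul _ _ hx hw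
  | add x w hx hw => rw [map_add]; exact hPadd _ _ hx hw
end
end
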